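/- arXiv:2602.06461 — 2 statements merged into one kernel-verified Lean document; each statement's English description precedes it below -/
import Mathlib

section
/- Assume the abstract setting described in the context. Let μ > 0 satisfy M·c·μ^{ρ−1}·B ≤ 1/4 and let τ ∈ (0,∞). Suppose g₁, g₂ : (0,τ] → V are continuous and u₁, u₂ : (0,τ] → V are mild solutions with forcings g₁ and g₂ respectively on (0,τ], with sup_{t∈(0,τ]} t^{αε}‖u₁(t)‖_V ≤ μ and sup_{t∈(0,τ]} t^{αε}‖u₂(t)‖_V ≤ μ. Then sup_{t∈(0,τ]} t^{αε}‖u₁(t) − u₂(t)‖_V ≤ 2 · sup_{t∈(0,τ]} t^{αε}‖g₁(t) − g₂(t)‖_V. -/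
open MeasureTheory Set Filter Topology intervalIntegral
open scoped ENNReal

/-- `u` is a mild solution with forcing `g` on the set `S ⊆ (0,∞)`: `u` is continuous on `S`
and for every `t ∈ S` the Bochner integral `∫₀^t R(t-s) f(u(s)) ds` converges and
`u t = g t + ∫₀^t R(t-s) f(u(s)) ds`. -/
def IsMildSolutionOn {V W : Type*} [NormedAddCommGroup V] [NormedSpace ℝ V]
    [NormedAddCommGroup W] [NormedSpace ℝ W]
    (R : ℝ → W →L[ℝ] V) (f : V → W) (g u : ℝ → V) (S : Set ℝ) : Prop :=
  ContinuousOn u S ∧ ∀ t ∈ S,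
    IntervalIntegrable (fun s => R (t - s) (f (u s))) volume 0 t ∧
    u t = g t + ∫ s in (0:ℝ)..t, R (t - s) (f (u s))

/-!
Let `K` be the weighted supremum of `u₁ - u₂`. Subtracting the two Duhamel formulas, the local
Lipschitz bound on `f` and the smoothing bound on `R` estimate the integrand by
`2 M c μ^{ρ-1} K (t-s)^{αε(ρ-1)-1} s^{-αρε}`; rescaling `s ↦ t s` turns its integral into
`B t^{-αε}`. Hence `K ≤ sup t^{αε}‖g₁ - g₂‖ + 2 M c μ^{ρ-1} B K`, and the smallness condition
lets the last term be absorbed.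
-/

section BetaKernel

lemma rpow_sub_mul_rpow_neg_eq {a b t s : ℝ} (ht : 0 < t) (hs : s ∈ Icc 0 t) :
    (t - s) ^ a * s ^ (-b) = t ^ (a - b) * ((1 - s / t) ^ a * (s / t) ^ (-b)) := by
  have h1 : (1 : ℝ) - s / t = (t - s) / t := by field_simp
  rw [h1, Real.div_rpow (by linarith [hs.2]) ht.le, Real.div_rpow hs.1 ht.le,
    Real.rpow_sub ht, Real.rpow_neg ht.le]
  field_simp

variable {a b t : ℝ}

lemma intervalIntegrable_rpow_sub_mul_rpow_neg (ht : 0 < t)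
    (h : IntervalIntegrable (fun s => (1 - s) ^ a * s ^ (-b)) volume 0 1) :
    IntervalIntegrable (fun s => (t - s) ^ a * s ^ (-b)) volume 0 t := by
  have hscaled := (h.comp_mul_right (c := t⁻¹)).const_mul (t ^ (a - b))
  simp only [zero_div, one_div, inv_inv, ← div_eq_mul_inv] at hscaled
  refine hscaled.congr fun s hs => ?_
  rw [uIoc_of_le ht.le] at hs
  exact (rpow_sub_mul_rpow_neg_eq ht (Ioc_subset_Icc_self hs)).symm

lemma integral_rpow_sub_mul_rpow_neg (ht : 0 < t) :
    ∫ s in (0:ℝ)..t, (t - s) ^ a * s ^ (-b)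
      = t ^ (a - b + 1) * ∫ s in (0:ℝ)..1, (1 - s) ^ a * s ^ (-b) := by
  rw [integral_congr fun s hs => rpow_sub_mul_rpow_neg_eq ht (uIcc_of_le ht.le ▸ hs),
    intervalIntegral.integral_const_mul,
    integral_comp_div (fun s => (1 - s) ^ a * s ^ (-b)) ht.ne',
    zero_div, div_self ht.ne', smul_eq_mul, Real.rpow_add_one ht.ne']
  ring

lemma norm_integral_le_of_norm_le_beta_kernel {E : Type*} [NormedAddCommGroup E]
    [NormedSpace ℝ E] {F : ℝ → E} {C : ℝ} (ht : 0 < t)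
    (h : IntervalIntegrable (fun s => (1 - s) ^ a * s ^ (-b)) volume 0 1)
    (hF : ∀ s ∈ Ioo 0 t, ‖F s‖ ≤ C * ((t - s) ^ a * s ^ (-b))) :
    ‖∫ s in (0:ℝ)..t, F s‖
      ≤ C * t ^ (a - b + 1) * ∫ s in (0:ℝ)..1, (1 - s) ^ a * s ^ (-b) := by
  have hbound : ∀ᵐ s, s ∈ Ioc 0 t → ‖F s‖ ≤ C * ((t - s) ^ a * s ^ (-b)) := by
    filter_upwards [Measure.ae_ne volume t] with s hst hs
    exact hF s ⟨hs.1, lt_of_le_of_ne hs.2 hst⟩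
  calc ‖∫ s in (0:ℝ)..t, F s‖
      ≤ ∫ s in (0:ℝ)..t, C * ((t - s) ^ a * s ^ (-b)) :=
        norm_integral_le_of_norm_le ht.le hbound
          ((intervalIntegrable_rpow_sub_mul_rpow_neg ht h).const_mul C)
    _ = _ := by
      rw [intervalIntegral.integral_const_mul, integral_rpow_sub_mul_rpow_neg ht, mul_assoc]

end BetaKernel

lemma le_mul_rpow_neg_of_rpow_mul_le {t p x m : ℝ} (ht : 0 < t) (h : t ^ p * x ≤ m) :
    x ≤ m * t ^ (-p) := by
  rw [Real.rpow_neg ht.le, ← div_eq_mul_inv, le_div_iff₀' (Real.rpow_pos_of_pos ht p)]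
  exact h

lemma rpow_mul_rpow_neg_mul {t p m : ℝ} (ht : 0 < t) : t ^ p * (m * t ^ (-p)) = m := by
  rw [mul_left_comm, ← Real.rpow_add ht, add_neg_cancel, Real.rpow_zero, mul_one]

lemma norm_sub_le_of_rpow_lipschitz {V W : Type*} [NormedAddCommGroup V]
    [NormedAddCommGroup W] {f : V → W} {c ρ r δ : ℝ} (hρ : 1 ≤ ρ) (hc : 0 ≤ c)
    (hf : ∀ x y : V, ‖f x - f y‖ ≤ c * (‖x‖ ^ (ρ - 1) + ‖y‖ ^ (ρ - 1)) * ‖x - y‖)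
    {x y : V} (hx : ‖x‖ ≤ r) (hy : ‖y‖ ≤ r) (hxy : ‖x - y‖ ≤ δ) :
    ‖f x - f y‖ ≤ 2 * c * r ^ (ρ - 1) * δ := by
  have hr : 0 ≤ r := (norm_nonneg x).trans hx
  have hρ1 : 0 ≤ ρ - 1 := by linarith
  have hpow : ‖x‖ ^ (ρ - 1) + ‖y‖ ^ (ρ - 1) ≤ 2 * r ^ (ρ - 1) := by
    linarith [Real.rpow_le_rpow (norm_nonneg x) hx hρ1,
      Real.rpow_le_rpow (norm_nonneg y) hy hρ1]
  calc ‖f x - f y‖ ≤ c * (‖x‖ ^ (ρ - 1) + ‖y‖ ^ (ρ - 1)) * ‖x - y‖ := hf x y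
    _ ≤ c * (2 * r ^ (ρ - 1)) * δ := by gcongr
    _ = 2 * c * r ^ (ρ - 1) * δ := by ring

section Duhamel

variable {V W : Type*} [NormedAddCommGroup V] [NormedSpace ℝ V]
  [NormedAddCommGroup W] [NormedSpace ℝ W]

variable {R : ℝ → W →L[ℝ] V} {f : V → W} {u₁ u₂ : ℝ → V} {ρ p M c μ K t : ℝ}

lemma norm_duhamel_integrand_sub_le (hρ : 1 ≤ ρ) (hM : 0 ≤ M) (hc : 0 ≤ c) (hμ : 0 ≤ μ)
    (hRbound : ∀ t > (0:ℝ), ∀ w : W, ‖R t w‖ ≤ M * t ^ ((ρ - 1) * p - 1) * ‖w‖)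
    (hf : ∀ x y : V, ‖f x - f y‖ ≤ c * (‖x‖ ^ (ρ - 1) + ‖y‖ ^ (ρ - 1)) * ‖x - y‖)
    {s : ℝ} (hs : s ∈ Ioo 0 t)
    (hu₁ : s ^ p * ‖u₁ s‖ ≤ μ) (hu₂ : s ^ p * ‖u₂ s‖ ≤ μ) (hK : s ^ p * ‖u₁ s - u₂ s‖ ≤ K) :
    ‖R (t - s) (f (u₁ s)) - R (t - s) (f (u₂ s))‖
      ≤ 2 * M * c * μ ^ (ρ - 1) * K * ((t - s) ^ ((ρ - 1) * p - 1) * s ^ (-(ρ * p))) := by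
  have hs0 : 0 < s := hs.1
  have hf_diff := norm_sub_le_of_rpow_lipschitz hρ hc hf
    (le_mul_rpow_neg_of_rpow_mul_le hs0 hu₁) (le_mul_rpow_neg_of_rpow_mul_le hs0 hu₂)
    (le_mul_rpow_neg_of_rpow_mul_le hs0 hK)
  have hweight : (μ * s ^ (-p)) ^ (ρ - 1) * s ^ (-p) = μ ^ (ρ - 1) * s ^ (-(ρ * p)) := by
    rw [Real.mul_rpow hμ (Real.rpow_nonneg hs0.le _), ← Real.rpow_mul hs0.le, mul_assoc,
      ← Real.rpow_add hs0]
    ring_nf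
  calc ‖R (t - s) (f (u₁ s)) - R (t - s) (f (u₂ s))‖
      = ‖R (t - s) (f (u₁ s) - f (u₂ s))‖ := by rw [map_sub]
    _ ≤ M * (t - s) ^ ((ρ - 1) * p - 1) * ‖f (u₁ s) - f (u₂ s)‖ :=
        hRbound _ (sub_pos.mpr hs.2) _
    _ ≤ M * (t - s) ^ ((ρ - 1) * p - 1) * (2 * c * (μ * s ^ (-p)) ^ (ρ - 1) * (K * s ^ (-p))) := by
        gcongr
        exact mul_nonneg hM (Real.rpow_nonneg (sub_pos.mpr hs.2).le _)
    _ = 2 * M * c * K * (t - s) ^ ((ρ - 1) * p - 1) * ((μ * s ^ (-p)) ^ (ρ - 1) * s ^ (-p)) := by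
        ring
    _ = _ := by rw [hweight]; ring

lemma rpow_mul_norm_integral_duhamel_sub_le (hρ : 1 ≤ ρ) (hM : 0 ≤ M) (hc : 0 ≤ c)
    (hμ : 0 ≤ μ) (ht : 0 < t)
    (hRbound : ∀ t > (0:ℝ), ∀ w : W, ‖R t w‖ ≤ M * t ^ ((ρ - 1) * p - 1) * ‖w‖)
    (hf : ∀ x y : V, ‖f x - f y‖ ≤ c * (‖x‖ ^ (ρ - 1) + ‖y‖ ^ (ρ - 1)) * ‖x - y‖)
    (hBint : IntervalIntegrable
      (fun s => (1 - s) ^ ((ρ - 1) * p - 1) * s ^ (-(ρ * p))) volume 0 1)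
    (hu₁ : ∀ s ∈ Ioo 0 t, s ^ p * ‖u₁ s‖ ≤ μ) (hu₂ : ∀ s ∈ Ioo 0 t, s ^ p * ‖u₂ s‖ ≤ μ)
    (hK : ∀ s ∈ Ioo 0 t, s ^ p * ‖u₁ s - u₂ s‖ ≤ K) :
    t ^ p * ‖∫ s in (0:ℝ)..t, (R (t - s) (f (u₁ s)) - R (t - s) (f (u₂ s)))‖
      ≤ 2 * M * c * μ ^ (ρ - 1) *
          (∫ s in (0:ℝ)..1, (1 - s) ^ ((ρ - 1) * p - 1) * s ^ (-(ρ * p))) * K := by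
  have hexp : (ρ - 1) * p - 1 - ρ * p + 1 = -p := by ring
  have h := norm_integral_le_of_norm_le_beta_kernel ht hBint fun s hs =>
    norm_duhamel_integrand_sub_le hρ hM hc hμ hRbound hf hs (hu₁ s hs) (hu₂ s hs) (hK s hs)
  rw [hexp] at h
  calc t ^ p * ‖∫ s in (0:ℝ)..t, (R (t - s) (f (u₁ s)) - R (t - s) (f (u₂ s)))‖
      ≤ t ^ p * (2 * M * c * μ ^ (ρ - 1) * K * t ^ (-p) *
          ∫ s in (0:ℝ)..1, (1 - s) ^ ((ρ - 1) * p - 1) * s ^ (-(ρ * p))) := by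
        gcongr
    _ = _ := by
        rw [mul_right_comm _ (t ^ (-p)), rpow_mul_rpow_neg_mul ht]
        ring

end Duhamel

lemma csSup_weighted_norm_le_two_mul {V : Type*} [NormedAddCommGroup V] {S : Set ℝ}
    {w : ℝ → ℝ} {x y z : ℝ → V} (hS : S.Nonempty) (hw : ∀ t ∈ S, 0 ≤ w t)
    (hxyz : ∀ t ∈ S, x t = y t + z t) (hx : BddAbove ((fun t => w t * ‖x t‖) '' S))
    (hz : ∀ t ∈ S, w t * ‖z t‖ ≤ sSup ((fun t => w t * ‖x t‖) '' S) / 2) :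
    sSup ((fun t => w t * ‖x t‖) '' S) ≤ 2 * sSup ((fun t => w t * ‖y t‖) '' S) := by
  set K := sSup ((fun t => w t * ‖x t‖) '' S)
  have hxK : ∀ t ∈ S, w t * ‖x t‖ ≤ K := fun t ht => le_csSup hx (mem_image_of_mem _ ht)
  have hy : BddAbove ((fun t => w t * ‖y t‖) '' S) := by
    refine ⟨K + K / 2, forall_mem_image.mpr fun t ht => ?_⟩
    have hyt : y t = x t - z t := by rw [hxyz t ht, add_sub_cancel_right]
    have := mul_le_mul_of_nonneg_left (hyt ▸ norm_sub_le (x t) (z t)) (hw t ht)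
    linarith [hxK t ht, hz t ht]
  have hxy : ∀ t ∈ S, w t * ‖x t‖ ≤ w t * ‖y t‖ + K / 2 := fun t ht => by
    have := mul_le_mul_of_nonneg_left (hxyz t ht ▸ norm_add_le (y t) (z t)) (hw t ht)
    linarith [hz t ht]
  have hKy : K ≤ sSup ((fun t => w t * ‖y t‖) '' S) + K / 2 :=
    csSup_le (hS.image _) <| forall_mem_image.mpr fun t ht =>
      (hxy t ht).trans (by gcongr; exact le_csSup hy (mem_image_of_mem _ ht))
  linarith

theorem continuous_dependence_local_general
    {V W : Type*} [NormedAddCommGroup V] [NormedSpace ℝ V]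
    [NormedAddCommGroup W] [NormedSpace ℝ W]
    (ρ α ε M c B : ℝ)
    (hρ : 1 < ρ)
    (hM : 0 < M) (hc : 0 < c)
    (R : ℝ → W →L[ℝ] V)
    (hRbound : ∀ t > (0:ℝ), ∀ w : W, ‖R t w‖ ≤ M * t ^ (α * (ρ - 1) * ε - 1) * ‖w‖)
    (f : V → W)
    (hf : ∀ x y : V, ‖f x - f y‖ ≤ c * (‖x‖ ^ (ρ - 1) + ‖y‖ ^ (ρ - 1)) * ‖x - y‖)
    (hBint : IntervalIntegrable
      (fun s => (1 - s) ^ (α * (ρ - 1) * ε - 1) * s ^ (-(α * ρ * ε))) volume 0 1)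
    (hB : B = ∫ s in (0:ℝ)..1, (1 - s) ^ (α * (ρ - 1) * ε - 1) * s ^ (-(α * ρ * ε)))
    (μ : ℝ) (hμ : 0 < μ) (hsmall : M * c * μ ^ (ρ - 1) * B ≤ 1 / 4)
    (τ : ℝ) (hτ : 0 < τ)
    (g₁ g₂ : ℝ → V)
    (u₁ u₂ : ℝ → V)
    (hu₁ : IsMildSolutionOn R f g₁ u₁ (Ioc 0 τ))
    (hu₂ : IsMildSolutionOn R f g₂ u₂ (Ioc 0 τ))
    (hu₁bdd : ∀ t ∈ Ioc (0:ℝ) τ, t ^ (α * ε) * ‖u₁ t‖ ≤ μ)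
    (hu₂bdd : ∀ t ∈ Ioc (0:ℝ) τ, t ^ (α * ε) * ‖u₂ t‖ ≤ μ) :
    sSup ((fun t => t ^ (α * ε) * ‖u₁ t - u₂ t‖) '' Ioc 0 τ) ≤
      2 * sSup ((fun t => t ^ (α * ε) * ‖g₁ t - g₂ t‖) '' Ioc 0 τ) := by
  rw [show α * (ρ - 1) * ε = (ρ - 1) * (α * ε) by ring] at hRbound hBint hB
  rw [show α * ρ * ε = ρ * (α * ε) by ring] at hBint hB
  subst hB
  have hbdd : BddAbove ((fun t => t ^ (α * ε) * ‖u₁ t - u₂ t‖) '' Ioc 0 τ) :=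
    ⟨2 * μ, forall_mem_image.mpr fun t ht => by
      have := mul_le_mul_of_nonneg_left (norm_sub_le (u₁ t) (u₂ t))
        (Real.rpow_nonneg ht.1.le (α * ε))
      linarith [hu₁bdd t ht, hu₂bdd t ht]⟩
  set K := sSup ((fun t => t ^ (α * ε) * ‖u₁ t - u₂ t‖) '' Ioc 0 τ)
  have hK0 : 0 ≤ K := le_csSup_of_le hbdd (mem_image_of_mem _ ⟨hτ, le_rfl⟩) (by positivity)
  have hsub : ∀ t ∈ Ioc 0 τ, Ioo 0 t ⊆ Ioc 0 τ := fun t ht s hs => ⟨hs.1, hs.2.le.trans ht.2⟩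
  refine csSup_weighted_norm_le_two_mul
    (z := fun t => ∫ s in (0:ℝ)..t, (R (t - s) (f (u₁ s)) - R (t - s) (f (u₂ s))))
    ⟨τ, hτ, le_rfl⟩ (fun t ht => Real.rpow_nonneg ht.1.le _)
    (fun t ht => ?_) hbdd fun t ht => ?_
  · rw [(hu₁.2 t ht).2, (hu₂.2 t ht).2, integral_sub (hu₁.2 t ht).1 (hu₂.2 t ht).1]
    abel
  · refine (rpow_mul_norm_integral_duhamel_sub_le hρ.le hM.le hc.le hμ.le ht.1 hRbound hf hBint
      (fun s hs => hu₁bdd s (hsub t ht hs)) (fun s hs => hu₂bdd s (hsub t ht hs))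
      (fun s hs => le_csSup hbdd (mem_image_of_mem _ (hsub t ht hs)))).trans ?_
    linarith [mul_le_mul_of_nonneg_left hsmall hK0]

/-- **Continuous-dependence estimate of Theorem 1.1(B).**
If `u₁, u₂` are mild solutions on `(0,τ]` with forcings `g₁, g₂` and weighted norms `≤ μ`,
where `M c μ^{ρ-1} B ≤ 1/4`, then
`sup_{t∈(0,τ]} t^{αε}‖u₁ t - u₂ t‖ ≤ 2 sup_{t∈(0,τ]} t^{αε}‖g₁ t - g₂ t‖`. -/
theorem continuous_dependence_local
    {V W : Type*} [NormedAddCommGroup V] [NormedSpace ℝ V] [CompleteSpace V]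
    [NormedAddCommGroup W] [NormedSpace ℝ W] [CompleteSpace W]
    (ρ α ε M c B : ℝ)
    (hρ : 1 < ρ) (hα : 1 < α) (hε : 0 < ε) (hαρε : α * ρ * ε < 1)
    (hM : 0 < M) (hc : 0 < c)
    (R : ℝ → W →L[ℝ] V)
    (hRcont : ∀ w : W, ContinuousOn (fun t => R t w) (Ioi (0:ℝ)))
    (hRbound : ∀ t > (0:ℝ), ∀ w : W, ‖R t w‖ ≤ M * t ^ (α * (ρ - 1) * ε - 1) * ‖w‖)
    (f : V → W) (hf0 : f 0 = 0)
    (hf : ∀ x y : V, ‖f x - f y‖ ≤ c * (‖x‖ ^ (ρ - 1) + ‖y‖ ^ (ρ - 1)) * ‖x - y‖)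
    (hBint : IntervalIntegrable
      (fun s => (1 - s) ^ (α * (ρ - 1) * ε - 1) * s ^ (-(α * ρ * ε))) volume 0 1)
    (hB : B = ∫ s in (0:ℝ)..1, (1 - s) ^ (α * (ρ - 1) * ε - 1) * s ^ (-(α * ρ * ε)))
    (μ : ℝ) (hμ : 0 < μ) (hsmall : M * c * μ ^ (ρ - 1) * B ≤ 1 / 4)
    (τ : ℝ) (hτ : 0 < τ)
    (g₁ g₂ : ℝ → V) (hg₁ : ContinuousOn g₁ (Ioc 0 τ)) (hg₂ : ContinuousOn g₂ (Ioc 0 τ))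
    (u₁ u₂ : ℝ → V)
    (hu₁ : IsMildSolutionOn R f g₁ u₁ (Ioc 0 τ))
    (hu₂ : IsMildSolutionOn R f g₂ u₂ (Ioc 0 τ))
    (hu₁bdd : ∀ t ∈ Ioc (0:ℝ) τ, t ^ (α * ε) * ‖u₁ t‖ ≤ μ)
    (hu₂bdd : ∀ t ∈ Ioc (0:ℝ) τ, t ^ (α * ε) * ‖u₂ t‖ ≤ μ) :
    sSup ((fun t => t ^ (α * ε) * ‖u₁ t - u₂ t‖) '' Ioc 0 τ) ≤
      2 * sSup ((fun t => t ^ (α * ε) * ‖g₁ t - g₂ t‖) '' Ioc 0 τ) :=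
  continuous_dependence_local_general ρ α ε M c B hρ hM hc R hRbound f hf hBint hB μ hμ hsmall τ hτ
    g₁ g₂ u₁ u₂ hu₁ hu₂ hu₁bdd hu₂bdd
end

section
/- Assume the abstract setting described in the context. Let τ₁ ∈ (0,∞), let g : (0,τ₁] → V be continuous, and let u, v : (0,τ₁] → V both be mild solutions with forcing g on (0,τ₁] satisfying lim_{t→0⁺} t^{αε}‖u(t)‖_V = 0 and lim_{t→0⁺} t^{αε}‖v(t)‖_V = 0. Then u(t) = v(t) for all t ∈ (0,τ₁]. -/
/-!
Write `w = u - v`. Near `t = 0` the vanishing weighted norms give `s^(αε) ‖u s‖, s^(αε) ‖v s‖ ≤ η`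
on some `(0, δ₀]`. The kernel bound and the growth condition on `f` then show that the weighted
supremum `N` of `w` over `(0, δ₀]` satisfies `N ≤ 2 M c η^(ρ-1) B N`, the Beta integral `B`
arising from the substitution `s = t σ`; so `N = 0` once `η` is small. Away from `0`, `u` and `v`
are bounded on `[δ₀, τ₁]` by continuity, and the same estimate without weights shows: if `u = v`
on `(0, a]`, then `sup_(a, a+δ] ‖w‖ ≤ C δ^γ sup_(a, a+δ] ‖w‖` with `γ = α(ρ-1)ε > 0` and `C`
independent of `a`. For small `δ` this forces `u = v` on `(0, a + δ]`, and finitely many such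
steps reach `τ₁`.
-/

open MeasureTheory Set Filter Topology intervalIntegral
open scoped ENNReal

lemma nonpos_of_forall_bound_imp_half_bound {S : Set ℝ} {φ : ℝ → ℝ} (hφ : BddAbove (φ '' S))
    (hhalf : ∀ N, 0 ≤ N → (∀ s ∈ S, φ s ≤ N) → ∀ s ∈ S, φ s ≤ N / 2) :
    ∀ s ∈ S, φ s ≤ 0 := by
  intro s hs
  set N := max (sSup (φ '' S)) 0
  have hbound : ∀ s ∈ S, φ s ≤ N := fun s hs => (le_csSup hφ (mem_image_of_mem φ hs)).trans
    (le_max_left _ _)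
  have hhalved := hhalf N (le_max_right _ _) hbound
  have hsup : sSup (φ '' S) ≤ N / 2 :=
    csSup_le ⟨φ s, mem_image_of_mem φ hs⟩ (forall_mem_image.2 hhalved)
  have hN : N ≤ N / 2 := max_le hsup (by positivity)
  linarith [hhalved s hs]

lemma exists_pos_mul_rpow_le {p : ℝ} (hp : 0 < p) (C : ℝ) {ε : ℝ} (hε : 0 < ε) :
    ∃ η > 0, C * η ^ p ≤ ε := by
  have hcont : ContinuousWithinAt (fun η : ℝ => C * η ^ p) (Ioi 0) 0 :=
    ((Real.continuousAt_rpow_const 0 p (Or.inr hp.le)).const_mul C).continuousWithinAt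
  have hlim : ∀ᶠ η in 𝓝[>] 0, C * η ^ p < ε := by
    refine hcont.eventually (gt_mem_nhds ?_)
    simpa [Real.zero_rpow hp.ne'] using hε
  obtain ⟨η, hη, hpos⟩ := (hlim.and self_mem_nhdsWithin).exists
  exact ⟨η, hpos, hη.le⟩

lemma step_induction_min_add {p : ℝ → Prop} {a₀ b δ : ℝ} (hδ : 0 < δ) (hab : a₀ ≤ b)
    (h₀ : p a₀) (hstep : ∀ a ∈ Icc a₀ b, p a → p (min (a + δ) b)) : p b := by
  have hiter : ∀ n : ℕ, p (min (a₀ + n * δ) b) := by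
    intro n
    induction n with
    | zero => simpa [min_eq_left hab] using h₀
    | succ n ih =>
      have h := hstep _ ⟨le_min (by nlinarith [n.cast_nonneg (α := ℝ)]) hab, min_le_right _ _⟩ ih
      rwa [← min_add_add_right, min_assoc, min_eq_right (by linarith : b ≤ b + δ),
        add_assoc, ← add_one_mul, ← Nat.cast_succ] at h
  obtain ⟨n, hn⟩ := exists_nat_gt ((b - a₀) / δ)
  rw [div_lt_iff₀ hδ] at hn
  simpa [min_eq_right (by linarith : b ≤ a₀ + n * δ)] using hiter n

lemma norm_integral_le_of_norm_le_Ioo {E : Type*} [NormedAddCommGroup E] [NormedSpace ℝ E]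
    {f : ℝ → E} {g : ℝ → ℝ} {a b : ℝ} (hab : a ≤ b) (h : ∀ s ∈ Ioo a b, ‖f s‖ ≤ g s)
    (hg : IntervalIntegrable g volume a b) : ‖∫ s in a..b, f s‖ ≤ ∫ s in a..b, g s := by
  refine norm_integral_le_of_norm_le hab ?_ hg
  rw [← ae_restrict_iff' measurableSet_Ioc, ← restrict_Ioo_eq_restrict_Ioc]
  exact ae_restrict_of_forall_mem measurableSet_Ioo h

lemma mul_sub_rpow_mul_rpow {t s : ℝ} (ht : 0 < t) (hs : s ∈ Icc (0 : ℝ) 1) (a b : ℝ) :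
    (t - t * s) ^ a * (t * s) ^ b = t ^ (a + b) * ((1 - s) ^ a * s ^ b) := by
  rw [← mul_one_sub, Real.mul_rpow ht.le (by linarith [hs.2]), Real.mul_rpow ht.le hs.1,
    Real.rpow_add ht]
  ring

lemma integral_sub_rpow_mul_rpow {t : ℝ} (ht : 0 < t) (a b : ℝ) :
    ∫ s in (0 : ℝ)..t, (t - s) ^ a * s ^ b =
      t ^ (a + b + 1) * ∫ s in (0 : ℝ)..1, (1 - s) ^ a * s ^ b := by
  have hscaled : ∫ s in (0 : ℝ)..1, (t - t * s) ^ a * (t * s) ^ b =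
      t ^ (a + b) * ∫ s in (0 : ℝ)..1, (1 - s) ^ a * s ^ b := by
    rw [← intervalIntegral.integral_const_mul]
    exact integral_congr fun s hs => mul_sub_rpow_mul_rpow ht (by simpa using hs) a b
  rw [integral_comp_mul_left (fun s => (t - s) ^ a * s ^ b) ht.ne', mul_zero, mul_one,
    smul_eq_mul] at hscaled
  rw [Real.rpow_add_one ht.ne', mul_comm _ t, mul_assoc, ← hscaled, mul_inv_cancel_left₀ ht.ne']

lemma IntervalIntegrable.sub_rpow_mul_rpow {a b : ℝ}
    (h : IntervalIntegrable (fun s => (1 - s) ^ a * s ^ b) volume 0 1) {t : ℝ} (ht : 0 < t) :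
    IntervalIntegrable (fun s => (t - s) ^ a * s ^ b) volume 0 t := by
  have hscaled :
      IntervalIntegrable (fun s => (t - t * s) ^ a * (t * s) ^ b) volume (0 / t) (t / t) := by
    rw [zero_div, div_self ht.ne']
    exact (h.const_mul (t ^ (a + b))).congr fun s hs =>
      (mul_sub_rpow_mul_rpow ht (by simpa using Ioc_subset_Icc_self hs) a b).symm
  exact (IntervalIntegrable.comp_mul_left_iff (f := fun s => (t - s) ^ a * s ^ b) ht.ne').1 hscaled

lemma le_mul_rpow_neg_of_rpow_mul_le_s8 {s κ x η : ℝ} (hs : 0 < s) (h : s ^ κ * x ≤ η) :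
    x ≤ η * s ^ (-κ) := by
  rwa [Real.rpow_neg hs.le, ← div_eq_mul_inv, le_div_iff₀ (Real.rpow_pos_of_pos hs κ), mul_comm]

lemma integral_sub_rpow_sub_one {γ : ℝ} (hγ : 0 < γ) (a t : ℝ) :
    ∫ s in a..t, (t - s) ^ (γ - 1) = (t - a) ^ γ / γ := by
  rw [integral_comp_sub_left (fun s => s ^ (γ - 1)), sub_self,
    integral_rpow (Or.inl (by linarith)), sub_add_cancel, Real.zero_rpow hγ.ne', sub_zero]

lemma intervalIntegrable_sub_rpow {r : ℝ} (hr : -1 < r) (a t : ℝ) :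
    IntervalIntegrable (fun s => (t - s) ^ r) volume a t := by
  simpa using (intervalIntegrable_rpow' hr (a := t - a) (b := 0)).comp_sub_left t

section MildSolution

variable {V W : Type*} [NormedAddCommGroup V] [NormedSpace ℝ V]
  [NormedAddCommGroup W] [NormedSpace ℝ W] {R : ℝ → W →L[ℝ] V} {f : V → W} {g u v : ℝ → V}
  {S : Set ℝ} {M c ρ γ : ℝ}

lemma norm_apply_sub_apply_le (hR : ∀ t > (0:ℝ), ∀ w : W, ‖R t w‖ ≤ M * t ^ (γ - 1) * ‖w‖)
    (hf : ∀ x y : V, ‖f x - f y‖ ≤ c * (‖x‖ ^ (ρ - 1) + ‖y‖ ^ (ρ - 1)) * ‖x - y‖)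
    (hM : 0 ≤ M) (hc : 0 ≤ c) (hρ : 1 ≤ ρ) {t A P : ℝ} {x y : V} (ht : 0 < t)
    (hx : ‖x‖ ≤ A) (hy : ‖y‖ ≤ A) (hxy : ‖x - y‖ ≤ P) :
    ‖R t (f x) - R t (f y)‖ ≤ 2 * M * c * A ^ (ρ - 1) * P * t ^ (γ - 1) := by
  have hρ' : 0 ≤ ρ - 1 := by linarith
  have hA : 0 ≤ A := (norm_nonneg x).trans hx
  calc ‖R t (f x) - R t (f y)‖ = ‖R t (f x - f y)‖ := by rw [map_sub]
    _ ≤ M * t ^ (γ - 1) * ‖f x - f y‖ := hR t ht _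
    _ ≤ M * t ^ (γ - 1) * (c * (A ^ (ρ - 1) + A ^ (ρ - 1)) * P) := by
      gcongr
      refine (hf x y).trans ?_
      gcongr
    _ = 2 * M * c * A ^ (ρ - 1) * P * t ^ (γ - 1) := by ring

lemma IsMildSolutionOn.sub_eq_integral (hu : IsMildSolutionOn R f g u S)
    (hv : IsMildSolutionOn R f g v S) {t : ℝ} (ht : t ∈ S) :
    u t - v t = ∫ s in (0:ℝ)..t, (R (t - s) (f (u s)) - R (t - s) (f (v s))) := by
  rw [integral_sub (hu.2 t ht).1 (hv.2 t ht).1, (hu.2 t ht).2, (hv.2 t ht).2]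
  abel

lemma IsMildSolutionOn.rpow_mul_norm_sub_le
    (hR : ∀ t > (0:ℝ), ∀ w : W, ‖R t w‖ ≤ M * t ^ (γ - 1) * ‖w‖)
    (hf : ∀ x y : V, ‖f x - f y‖ ≤ c * (‖x‖ ^ (ρ - 1) + ‖y‖ ^ (ρ - 1)) * ‖x - y‖)
    (hM : 0 ≤ M) (hc : 0 ≤ c) (hρ : 1 ≤ ρ) {κ β : ℝ} (hγ : γ = κ * (ρ - 1)) (hβ : β = κ * ρ)
    (hBint : IntervalIntegrable (fun s => (1 - s) ^ (γ - 1) * s ^ (-β)) volume 0 1)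
    (hu : IsMildSolutionOn R f g u S) (hv : IsMildSolutionOn R f g v S)
    {t η N : ℝ} (ht : t ∈ S) (ht0 : 0 < t)
    (hub : ∀ s ∈ Ioo 0 t, s ^ κ * ‖u s‖ ≤ η) (hvb : ∀ s ∈ Ioo 0 t, s ^ κ * ‖v s‖ ≤ η)
    (huv : ∀ s ∈ Ioo 0 t, s ^ κ * ‖u s - v s‖ ≤ N) :
    t ^ κ * ‖u t - v t‖ ≤
      2 * M * c * η ^ (ρ - 1) * N * ∫ s in (0:ℝ)..1, (1 - s) ^ (γ - 1) * s ^ (-β) := by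
  set K := 2 * M * c * η ^ (ρ - 1) * N
  have hpointwise : ∀ s ∈ Ioo 0 t,
      ‖R (t - s) (f (u s)) - R (t - s) (f (v s))‖ ≤ K * ((t - s) ^ (γ - 1) * s ^ (-β)) := by
    intro s hs
    have hη : 0 ≤ η :=
      (mul_nonneg (Real.rpow_nonneg hs.1.le κ) (norm_nonneg (u s))).trans (hub s hs)
    have hweights : (η * s ^ (-κ)) ^ (ρ - 1) * (N * s ^ (-κ)) = η ^ (ρ - 1) * N * s ^ (-β) := by
      rw [Real.mul_rpow hη (Real.rpow_nonneg hs.1.le _), ← Real.rpow_mul hs.1.le, mul_mul_mul_comm,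
        ← Real.rpow_add hs.1, hβ]
      ring_nf
    calc ‖R (t - s) (f (u s)) - R (t - s) (f (v s))‖
        ≤ 2 * M * c * (η * s ^ (-κ)) ^ (ρ - 1) * (N * s ^ (-κ)) * (t - s) ^ (γ - 1) :=
          norm_apply_sub_apply_le hR hf hM hc hρ (sub_pos.2 hs.2)
            (le_mul_rpow_neg_of_rpow_mul_le_s8 hs.1 (hub s hs))
            (le_mul_rpow_neg_of_rpow_mul_le_s8 hs.1 (hvb s hs))
            (le_mul_rpow_neg_of_rpow_mul_le_s8 hs.1 (huv s hs))
      _ = K * ((t - s) ^ (γ - 1) * s ^ (-β)) := by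
          rw [mul_assoc (2 * M * c), hweights]
          ring
  rw [hu.sub_eq_integral hv ht]
  calc t ^ κ * ‖∫ s in (0:ℝ)..t, (R (t - s) (f (u s)) - R (t - s) (f (v s)))‖
      ≤ t ^ κ * ∫ s in (0:ℝ)..t, K * ((t - s) ^ (γ - 1) * s ^ (-β)) := by
        gcongr
        exact norm_integral_le_of_norm_le_Ioo ht0.le hpointwise
          ((hBint.sub_rpow_mul_rpow ht0).const_mul K)
    _ = K * (∫ s in (0:ℝ)..1, (1 - s) ^ (γ - 1) * s ^ (-β)) * (t ^ κ * t ^ (γ - 1 + -β + 1)) := by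
        rw [intervalIntegral.integral_const_mul, integral_sub_rpow_mul_rpow ht0]
        ring
    _ = K * ∫ s in (0:ℝ)..1, (1 - s) ^ (γ - 1) * s ^ (-β) := by
        rw [← Real.rpow_add ht0, show κ + (γ - 1 + -β + 1) = 0 by rw [hγ, hβ]; ring,
          Real.rpow_zero, mul_one]

lemma IsMildSolutionOn.norm_sub_le_of_eqOn
    (hR : ∀ t > (0:ℝ), ∀ w : W, ‖R t w‖ ≤ M * t ^ (γ - 1) * ‖w‖)
    (hf : ∀ x y : V, ‖f x - f y‖ ≤ c * (‖x‖ ^ (ρ - 1) + ‖y‖ ^ (ρ - 1)) * ‖x - y‖)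
    (hM : 0 ≤ M) (hc : 0 ≤ c) (hρ : 1 ≤ ρ) (hγ : 0 < γ)
    (hu : IsMildSolutionOn R f g u S) (hv : IsMildSolutionOn R f g v S)
    {a t L P : ℝ} (ht : t ∈ S) (ha : 0 < a) (hat : a < t) (heq : EqOn u v (Ioc 0 a))
    (hub : ∀ s ∈ Ioo a t, ‖u s‖ ≤ L) (hvb : ∀ s ∈ Ioo a t, ‖v s‖ ≤ L)
    (huv : ∀ s ∈ Ioo a t, ‖u s - v s‖ ≤ P) :
    ‖u t - v t‖ ≤ 2 * M * c * L ^ (ρ - 1) * P * ((t - a) ^ γ / γ) := by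
  set D := fun s => R (t - s) (f (u s)) - R (t - s) (f (v s))
  have hD : IntervalIntegrable D volume 0 t := (hu.2 t ht).1.sub (hv.2 t ht).1
  have ha_mem : a ∈ uIcc 0 t := by rw [uIcc_of_le (ha.trans hat).le]; exact ⟨ha.le, hat.le⟩
  have hvanish : ∫ s in (0:ℝ)..a, D s = 0 := by
    rw [integral_congr_uIoo (g := fun _ => 0), intervalIntegral.integral_zero]
    intro s hs
    rw [uIoo_of_le ha.le] at hs
    simp [D, heq ⟨hs.1, hs.2.le⟩]
  have hsplit : ∫ s in (0:ℝ)..t, D s = ∫ s in a..t, D s := by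
    rw [← integral_add_adjacent_intervals (hD.mono_set (uIcc_subset_uIcc left_mem_uIcc ha_mem))
      (hD.mono_set (uIcc_subset_uIcc ha_mem right_mem_uIcc)), hvanish, zero_add]
  rw [hu.sub_eq_integral hv ht]
  change ‖∫ s in (0:ℝ)..t, D s‖ ≤ _
  calc ‖∫ s in (0:ℝ)..t, D s‖
      ≤ ∫ s in a..t, 2 * M * c * L ^ (ρ - 1) * P * (t - s) ^ (γ - 1) := by
        rw [hsplit]
        refine norm_integral_le_of_norm_le_Ioo hat.le (fun s hs => ?_)
          ((intervalIntegrable_sub_rpow (by linarith) a t).const_mul _)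
        exact norm_apply_sub_apply_le hR hf hM hc hρ (sub_pos.2 hs.2) (hub s hs) (hvb s hs)
          (huv s hs)
    _ = 2 * M * c * L ^ (ρ - 1) * P * ((t - a) ^ γ / γ) := by
        rw [intervalIntegral.integral_const_mul, integral_sub_rpow_sub_one hγ]

lemma IsMildSolutionOn.exists_eqOn_Ioc_of_tendsto
    (hR : ∀ t > (0:ℝ), ∀ w : W, ‖R t w‖ ≤ M * t ^ (γ - 1) * ‖w‖)
    (hf : ∀ x y : V, ‖f x - f y‖ ≤ c * (‖x‖ ^ (ρ - 1) + ‖y‖ ^ (ρ - 1)) * ‖x - y‖)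
    (hM : 0 ≤ M) (hc : 0 ≤ c) (hρ : 1 < ρ) {κ β : ℝ} (hγ : γ = κ * (ρ - 1)) (hβ : β = κ * ρ)
    (hBint : IntervalIntegrable (fun s => (1 - s) ^ (γ - 1) * s ^ (-β)) volume 0 1)
    {τ : ℝ} (hτ : 0 < τ) (hu : IsMildSolutionOn R f g u (Ioc 0 τ))
    (hv : IsMildSolutionOn R f g v (Ioc 0 τ))
    (hu0 : Tendsto (fun t => t ^ κ * ‖u t‖) (𝓝[>] 0) (𝓝 0))
    (hv0 : Tendsto (fun t => t ^ κ * ‖v t‖) (𝓝[>] 0) (𝓝 0)) :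
    ∃ δ ∈ Ioc 0 τ, EqOn u v (Ioc 0 δ) := by
  set B := ∫ s in (0:ℝ)..1, (1 - s) ^ (γ - 1) * s ^ (-β)
  obtain ⟨η, hη, hηB⟩ := exists_pos_mul_rpow_le (sub_pos.2 hρ) (2 * M * c * B) one_half_pos
  obtain ⟨δ₁, hδ₁, hsmall⟩ := mem_nhdsGT_iff_exists_Ioc_subset.1
    ((hu0.eventually_le_const hη).and (hv0.eventually_le_const hη))
  set δ := min δ₁ τ
  have hsmall' : ∀ s ∈ Ioc 0 δ, s ^ κ * ‖u s‖ ≤ η ∧ s ^ κ * ‖v s‖ ≤ η :=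
    fun s hs => hsmall ⟨hs.1, hs.2.trans (min_le_left _ _)⟩
  have hnonpos := nonpos_of_forall_bound_imp_half_bound (S := Ioc 0 δ)
    (φ := fun s => s ^ κ * ‖u s - v s‖) ?bdd ?half
  case bdd =>
    refine ⟨2 * η, forall_mem_image.2 fun s hs => ?_⟩
    have htri : s ^ κ * ‖u s - v s‖ ≤ s ^ κ * ‖u s‖ + s ^ κ * ‖v s‖ := by
      rw [← mul_add]
      exact mul_le_mul_of_nonneg_left (norm_sub_le _ _) (Real.rpow_nonneg hs.1.le _)
    linarith [hsmall' s hs]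
  case half =>
    intro N hN hbound t ht
    have hIoo : ∀ s ∈ Ioo 0 t, s ∈ Ioc 0 δ := fun s hs => ⟨hs.1, hs.2.le.trans ht.2⟩
    calc t ^ κ * ‖u t - v t‖ ≤ 2 * M * c * η ^ (ρ - 1) * N * B :=
          hu.rpow_mul_norm_sub_le hR hf hM hc hρ.le hγ hβ hBint hv
            ⟨ht.1, ht.2.trans (min_le_right _ _)⟩ ht.1
            (fun s hs => (hsmall' s (hIoo s hs)).1) (fun s hs => (hsmall' s (hIoo s hs)).2)
            (fun s hs => hbound s (hIoo s hs))
      _ = 2 * M * c * B * η ^ (ρ - 1) * N := by ring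
      _ ≤ 1 / 2 * N := mul_le_mul_of_nonneg_right hηB hN
      _ = N / 2 := by ring
  refine ⟨δ, ⟨lt_min hδ₁ hτ, min_le_right _ _⟩, fun s hs => ?_⟩
  have hw : ‖u s - v s‖ ≤ 0 := le_of_mul_le_mul_left (by simpa using hnonpos s hs)
    (Real.rpow_pos_of_pos hs.1 κ)
  exact sub_eq_zero.1 (norm_le_zero_iff.1 hw)

lemma IsMildSolutionOn.exists_forall_eqOn_Ioc_min_add
    (hR : ∀ t > (0:ℝ), ∀ w : W, ‖R t w‖ ≤ M * t ^ (γ - 1) * ‖w‖)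
    (hf : ∀ x y : V, ‖f x - f y‖ ≤ c * (‖x‖ ^ (ρ - 1) + ‖y‖ ^ (ρ - 1)) * ‖x - y‖)
    (hM : 0 ≤ M) (hc : 0 ≤ c) (hρ : 1 ≤ ρ) (hγ : 0 < γ) {τ δ₀ : ℝ}
    (hu : IsMildSolutionOn R f g u (Ioc 0 τ)) (hv : IsMildSolutionOn R f g v (Ioc 0 τ))
    (hδ₀ : 0 < δ₀) :
    ∃ δ > 0, ∀ a ∈ Icc δ₀ τ, EqOn u v (Ioc 0 a) → EqOn u v (Ioc 0 (min (a + δ) τ)) := by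
  have hsub : Icc δ₀ τ ⊆ Ioc 0 τ := fun x hx => ⟨hδ₀.trans_le hx.1, hx.2⟩
  obtain ⟨Lu, hLu⟩ := isCompact_Icc.exists_bound_of_continuousOn (hu.1.mono hsub)
  obtain ⟨Lv, hLv⟩ := isCompact_Icc.exists_bound_of_continuousOn (hv.1.mono hsub)
  set L := max Lu Lv
  obtain ⟨δ, hδ, hδL⟩ := exists_pos_mul_rpow_le hγ (2 * M * c * L ^ (ρ - 1) / γ) one_half_pos
  refine ⟨δ, hδ, fun a ha heq s hs => ?_⟩
  rcases le_or_gt s a with hsa | has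
  · exact heq ⟨hs.1, hsa⟩
  set b := min (a + δ) τ
  have hIcc : Icc a b ⊆ Icc δ₀ τ := fun x hx => ⟨ha.1.trans hx.1, hx.2.trans (min_le_right _ _)⟩
  have hL : 0 ≤ L := ((norm_nonneg _).trans (hLu a ha)).trans (le_max_left _ _)
  have hnonpos := nonpos_of_forall_bound_imp_half_bound (S := Ioc a b)
    (φ := fun s => ‖u s - v s‖) ?bdd ?half
  case bdd =>
    exact (isCompact_Icc.bddAbove_image ((hu.1.sub hv.1).norm.mono (hIcc.trans hsub))).mono
      (image_mono Ioc_subset_Icc_self)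
  case half =>
    intro N hN hbound t ht
    have hIoo : ∀ s ∈ Ioo a t, s ∈ Icc δ₀ τ := fun s hs => hIcc ⟨hs.1.le, hs.2.le.trans ht.2⟩
    have hta : t - a ≤ δ := by linarith [ht.2.trans (min_le_left _ _)]
    calc ‖u t - v t‖ ≤ 2 * M * c * L ^ (ρ - 1) * N * ((t - a) ^ γ / γ) :=
          hu.norm_sub_le_of_eqOn hR hf hM hc hρ hγ hv (hsub (hIcc ⟨ht.1.le, ht.2⟩))
            (hδ₀.trans_le ha.1) ht.1 heq
            (fun s hs => (hLu s (hIoo s hs)).trans (le_max_left _ _))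
            (fun s hs => (hLv s (hIoo s hs)).trans (le_max_right _ _))
            (fun s hs => hbound s ⟨hs.1, hs.2.le.trans ht.2⟩)
      _ ≤ 2 * M * c * L ^ (ρ - 1) * N * (δ ^ γ / γ) := by
          have := sub_pos.2 ht.1
          gcongr
      _ = 2 * M * c * L ^ (ρ - 1) / γ * δ ^ γ * N := by ring
      _ ≤ 1 / 2 * N := mul_le_mul_of_nonneg_right hδL hN
      _ = N / 2 := by ring
  exact sub_eq_zero.1 (norm_le_zero_iff.1 (hnonpos s ⟨has, hs.2⟩))

end MildSolution

theorem uniqueness_vanishing_class_general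
    {V W : Type*} [NormedAddCommGroup V] [NormedSpace ℝ V]
    [NormedAddCommGroup W] [NormedSpace ℝ W]
    (ρ α ε M c : ℝ)
    (hρ : 1 < ρ) (hα : 1 < α) (hε : 0 < ε)
    (hM : 0 < M) (hc : 0 < c)
    (R : ℝ → W →L[ℝ] V)
    (hRbound : ∀ t > (0:ℝ), ∀ w : W, ‖R t w‖ ≤ M * t ^ (α * (ρ - 1) * ε - 1) * ‖w‖)
    (f : V → W)
    (hf : ∀ x y : V, ‖f x - f y‖ ≤ c * (‖x‖ ^ (ρ - 1) + ‖y‖ ^ (ρ - 1)) * ‖x - y‖)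
    (hBint : IntervalIntegrable
      (fun s => (1 - s) ^ (α * (ρ - 1) * ε - 1) * s ^ (-(α * ρ * ε))) volume 0 1)
    (τ₁ : ℝ) (hτ₁ : 0 < τ₁)
    (g : ℝ → V)
    (u v : ℝ → V)
    (hu : IsMildSolutionOn R f g u (Ioc 0 τ₁))
    (hv : IsMildSolutionOn R f g v (Ioc 0 τ₁))
    (hu0 : Tendsto (fun t => t ^ (α * ε) * ‖u t‖) (𝓝[>] 0) (𝓝 0))
    (hv0 : Tendsto (fun t => t ^ (α * ε) * ‖v t‖) (𝓝[>] 0) (𝓝 0)) :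
    EqOn u v (Ioc 0 τ₁) := by
  have hγ : 0 < α * (ρ - 1) * ε := by
    have := sub_pos.2 hρ
    have : 0 < α := by linarith
    positivity
  obtain ⟨δ₀, hδ₀, heq₀⟩ := hu.exists_eqOn_Ioc_of_tendsto hRbound hf hM.le hc.le hρ (by ring)
    (by ring) hBint hτ₁ hv hu0 hv0
  obtain ⟨δ, hδ, hstep⟩ :=
    hu.exists_forall_eqOn_Ioc_min_add hRbound hf hM.le hc.le hρ.le hγ hv hδ₀.1
  exact step_induction_min_add (p := fun a => EqOn u v (Ioc 0 a)) hδ hδ₀.2 heq₀ hstep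

/-- **Theorem 1.1(C): uniqueness of ε-regular mild solutions with vanishing weighted norm.**
If `u` and `v` are both mild solutions with the same forcing `g` on `(0,τ₁]` and both satisfy
`lim_{t→0⁺} t^{αε}‖·(t)‖ = 0`, then `u = v` on `(0,τ₁]`. -/
theorem uniqueness_vanishing_class
    {V W : Type*} [NormedAddCommGroup V] [NormedSpace ℝ V] [CompleteSpace V]
    [NormedAddCommGroup W] [NormedSpace ℝ W] [CompleteSpace W]
    (ρ α ε M c B : ℝ)
    (hρ : 1 < ρ) (hα : 1 < α) (hε : 0 < ε) (hαρε : α * ρ * ε < 1)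
    (hM : 0 < M) (hc : 0 < c)
    (R : ℝ → W →L[ℝ] V)
    (hRcont : ∀ w : W, ContinuousOn (fun t => R t w) (Ioi (0:ℝ)))
    (hRbound : ∀ t > (0:ℝ), ∀ w : W, ‖R t w‖ ≤ M * t ^ (α * (ρ - 1) * ε - 1) * ‖w‖)
    (f : V → W) (hf0 : f 0 = 0)
    (hf : ∀ x y : V, ‖f x - f y‖ ≤ c * (‖x‖ ^ (ρ - 1) + ‖y‖ ^ (ρ - 1)) * ‖x - y‖)
    (hBint : IntervalIntegrable
      (fun s => (1 - s) ^ (α * (ρ - 1) * ε - 1) * s ^ (-(α * ρ * ε))) volume 0 1)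
    (hB : B = ∫ s in (0:ℝ)..1, (1 - s) ^ (α * (ρ - 1) * ε - 1) * s ^ (-(α * ρ * ε)))
    (τ₁ : ℝ) (hτ₁ : 0 < τ₁)
    (g : ℝ → V) (hg : ContinuousOn g (Ioc 0 τ₁))
    (u v : ℝ → V)
    (hu : IsMildSolutionOn R f g u (Ioc 0 τ₁))
    (hv : IsMildSolutionOn R f g v (Ioc 0 τ₁))
    (hu0 : Tendsto (fun t => t ^ (α * ε) * ‖u t‖) (𝓝[>] 0) (𝓝 0))
    (hv0 : Tendsto (fun t => t ^ (α * ε) * ‖v t‖) (𝓝[>] 0) (𝓝 0)) :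
    EqOn u v (Ioc 0 τ₁) :=
  uniqueness_vanishing_class_general ρ α ε M c hρ hα hε hM hc R hRbound f hf hBint τ₁ hτ₁ g u v hu
    hv hu0 hv0
end
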